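/- arXiv:1603.05475 — 3 statements merged into one kernel-verified Lean document; each statement's English description precedes it below -/
import Mathlib

section
/- Let p > 1 be a real number and α a real number with |α| ≠ 1. Define f(t) = Re(1/(1 - α p^{-it})) - 1/2 for real t. Then for every real T, (log p) · ∫_T^{T+1} |f(t)| dt ≤ π + (log p)/2. -/
/-!
Writing `z = p ^ (i t)`, which runs around the unit circle, the integrand is half the absolute
value of the Poisson kernel `(1 - α²) / |z - α|²` of the unit disc. The Poisson kernel has constant
sign on the circle, and for `|α| > 1` it is minus the kernel at the reflected point `1 / α`, so by
the Poisson formula its absolute value has mean `1` over the circle. Hence the integrand, as a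
function of `θ = t log p`, is `2π`-periodic with integral `π` per period, and an interval of length
`log p` is covered by at most `log p / (2π) + 1` periods.
-/

open Complex Metric MeasureTheory Real

theorem Function.Periodic.intervalIntegral_le_of_nonneg {g : ℝ → ℝ} {c : ℝ}
    (hg : Function.Periodic g c) (hc : 0 < c) (hint : IntervalIntegrable g volume 0 c)
    (hg0 : ∀ x, 0 ≤ g x) (a : ℝ) {L : ℝ} (hL : 0 ≤ L) :
    ∫ x in a..a + L, g x ≤ (L / c + 1) * ∫ x in 0..c, g x := by
  have hint := hg.intervalIntegrable₀ hc.ne' hint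
  set N := ⌈L / c⌉
  have hLN : L ≤ N * c := (div_le_iff₀ hc).1 (Int.le_ceil _)
  calc ∫ x in a..a + L, g x ≤ ∫ x in a..a + N • c, g x :=
        intervalIntegral.integral_mono_interval le_rfl (by linarith)
          (by rw [zsmul_eq_mul]; linarith) (Filter.Eventually.of_forall hg0) (hint _ _)
    _ = N * ∫ x in 0..c, g x := by
        rw [hg.intervalIntegral_add_zsmul_eq N a hint, hg.intervalIntegral_add_eq a 0, zero_add,
          zsmul_eq_mul]
    _ ≤ (L / c + 1) * ∫ x in 0..c, g x :=
        mul_le_mul_of_nonneg_right (Int.ceil_lt_add_one _).le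
          (intervalIntegral.integral_nonneg hc.le fun x _ => hg0 x)

theorem poissonKernel_nonneg {c w z : ℂ} (h : ‖w - c‖ ≤ ‖z - c‖) : 0 ≤ poissonKernel c w z :=
  div_nonneg (sub_nonneg.2 (pow_le_pow_left₀ (norm_nonneg _) h 2)) (sq_nonneg _)

theorem continuousAt_poissonKernel {c w z : ℂ} (h : z ≠ w) :
    ContinuousAt (poissonKernel c w) z := by
  have : z - c - (w - c) ≠ 0 := by rwa [sub_sub_sub_cancel_right, sub_ne_zero]
  unfold poissonKernel
  fun_prop (disch := positivity)

theorem circleAverage_poissonKernel {c w : ℂ} {R : ℝ} (hw : w ∈ ball c R) :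
    circleAverage (poissonKernel c w) c R = 1 := by
  have h := (diffContOnCl_const (c := (1 : ℂ)) (s := ball c R)).circleAverage_poissonKernel_smul hw
  have hP : (poissonKernel c w • fun _ => (1 : ℂ)) = ofRealCLM ∘ poissonKernel c w := by
    ext z; simp
  have hint : CircleIntegrable (poissonKernel c w) c R := by
    rw [poissonKernel_eq_re_herglotzRieszKernel]
    exact (continuous_re.comp_continuousOn
      (continuousOn_herglotzRieszKernel_sphere hw)).circleIntegrable'
  rwa [hP, ofRealCLM.circleAverage_comp_comm hint, ofRealCLM_apply, ofReal_eq_one] at h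

theorem norm_sub_inv_conj_of_norm_eq_one {w z : ℂ} (hw : w ≠ 0) (hz : ‖z‖ = 1) :
    ‖z - (starRingEnd ℂ w)⁻¹‖ = ‖z - w‖ / ‖w‖ := by
  have hconj : starRingEnd ℂ z * z = 1 := by
    rw [← normSq_eq_conj_mul_self, normSq_eq_norm_sq, hz]; norm_num
  have h : starRingEnd ℂ (starRingEnd ℂ w * (z - (starRingEnd ℂ w)⁻¹)) =
      starRingEnd ℂ z * (w - z) := by
    rw [mul_sub, mul_inv_cancel₀ ((map_ne_zero _).2 hw)]
    simp only [map_sub, map_mul, conj_conj, map_one]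
    linear_combination hconj
  have hnorm := congrArg norm h
  rw [Complex.norm_conj, norm_mul, norm_mul, Complex.norm_conj, Complex.norm_conj, hz,
    norm_sub_rev w] at hnorm
  rw [eq_div_iff (norm_ne_zero_iff.2 hw)]
  linarith

theorem poissonKernel_zero_inv_conj {w z : ℂ} (hw : w ≠ 0) (hz : ‖z‖ = 1) :
    poissonKernel 0 (starRingEnd ℂ w)⁻¹ z = -poissonKernel 0 w z := by
  have : 0 < ‖w‖ := norm_pos_iff.2 hw
  simp only [poissonKernel, sub_zero, norm_sub_inv_conj_of_norm_eq_one hw hz, norm_inv,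
    Complex.norm_conj, hz]
  field_simp
  ring

theorem circleAverage_abs_poissonKernel_zero_one {w : ℂ} (hw : ‖w‖ ≠ 1) :
    circleAverage (fun z => |poissonKernel 0 w z|) 0 1 = 1 := by
  rcases hw.lt_or_gt with hw | hw
  · rw [circleAverage_congr_sphere (f₂ := poissonKernel 0 w)]
    · exact circleAverage_poissonKernel (mem_ball_zero_iff.2 hw)
    · intro z hz
      rw [abs_one, mem_sphere_zero_iff_norm] at hz
      exact abs_of_nonneg (poissonKernel_nonneg (by simpa [hz] using hw.le))
  · have hw' : ‖(starRingEnd ℂ w)⁻¹‖ < 1 := by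
      rw [norm_inv, Complex.norm_conj]
      exact inv_lt_one_of_one_lt₀ hw
    rw [circleAverage_congr_sphere (f₂ := poissonKernel 0 (starRingEnd ℂ w)⁻¹)]
    · exact circleAverage_poissonKernel (mem_ball_zero_iff.2 hw')
    · intro z hz
      rw [abs_one, mem_sphere_zero_iff_norm] at hz
      have hz' : ‖(starRingEnd ℂ w)⁻¹ - 0‖ ≤ ‖z - 0‖ := by simpa [hz] using hw'.le
      rw [← abs_of_nonneg (poissonKernel_nonneg hz'),
        poissonKernel_zero_inv_conj (norm_pos_iff.1 (one_pos.trans hw)) hz, abs_neg]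

theorem re_one_div_one_sub_mul_inv_sub_half {w z : ℂ} (hz : z ≠ 0) (hzw : z ≠ w) :
    (1 / (1 - w * z⁻¹)).re - 1 / 2 = poissonKernel 0 w z / 2 := by
  have h : 1 / (1 - w * z⁻¹) - 1 / 2 = herglotzRieszKernel 0 w z / 2 := by
    have : z - w ≠ 0 := sub_ne_zero.2 hzw
    rw [herglotzRieszKernel]
    simp only [sub_zero]
    field_simp
    ring
  rw [poissonKernel_eq_re_herglotzRieszKernel, Function.comp_apply]
  simpa using congrArg re h

theorem ofReal_cpow_neg_I_mul {p : ℝ} (hp : 0 < p) (t : ℝ) :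
    (p : ℂ) ^ (-(I * t)) = (circleMap 0 1 (Real.log p * t))⁻¹ := by
  rw [cpow_def_of_ne_zero (by exact_mod_cast hp.ne'), circleMap_zero, ofReal_one, one_mul,
    ← Complex.exp_neg, ← ofReal_log hp.le]
  push_cast
  ring_nf

theorem integral_abs_poissonKernel_circleMap {w : ℂ} (hw : ‖w‖ ≠ 1) :
    ∫ θ in 0..2 * π, |poissonKernel 0 w (circleMap 0 1 θ)| = 2 * π := by
  have h := circleAverage_abs_poissonKernel_zero_one hw
  rw [circleAverage_def, smul_eq_mul, inv_mul_eq_one₀ (by positivity)] at h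
  exact h.symm

theorem circleMap_zero_one_ne {w : ℂ} (hw : ‖w‖ ≠ 1) (θ : ℝ) : circleMap 0 1 θ ≠ w := by
  rintro rfl
  simp at hw

theorem continuous_poissonKernel_circleMap {w : ℂ} (hw : ‖w‖ ≠ 1) :
    Continuous fun θ => poissonKernel 0 w (circleMap 0 1 θ) :=
  continuous_iff_continuousAt.2 fun θ =>
    (continuousAt_poissonKernel (circleMap_zero_one_ne hw θ)).comp
      (continuous_circleMap 0 1).continuousAt

theorem integral_abs_re_inv_one_sub_cpow_le {p α : ℝ} (hp : 1 < p) (hα : |α| ≠ 1) (T : ℝ) :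
    Real.log p *
      ∫ t in T..(T + 1),
        |((1 / (1 - (α : ℂ) * (p : ℂ) ^ (-(Complex.I * (t : ℂ))))).re - 1 / 2)| ≤
      Real.pi + Real.log p / 2 := by
  set L := Real.log p
  have hL : 0 < L := Real.log_pos hp
  have hα' : ‖(α : ℂ)‖ ≠ 1 := by rwa [norm_real, Real.norm_eq_abs]
  set g : ℝ → ℝ := fun θ => |poissonKernel 0 α (circleMap 0 1 θ)|
  have hg : Continuous g := (continuous_poissonKernel_circleMap hα').abs
  have hperiodic : Function.Periodic g (2 * π) := fun θ => by
    simp only [g, periodic_circleMap 0 1 θ]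
  have hintegrand (t : ℝ) :
      |(1 / (1 - α * (p : ℂ) ^ (-(I * t)))).re - 1 / 2| = g (L * t) / 2 := by
    rw [ofReal_cpow_neg_I_mul (by linarith) t, re_one_div_one_sub_mul_inv_sub_half
      (circleMap_ne_center one_ne_zero) (circleMap_zero_one_ne hα' _), abs_div, abs_two]
  calc L * ∫ t in T..T + 1, |(1 / (1 - α * (p : ℂ) ^ (-(I * t)))).re - 1 / 2|
      = (∫ θ in L * T..L * T + L, g θ) / 2 := by
        simp_rw [hintegrand, intervalIntegral.integral_div,
          intervalIntegral.integral_comp_mul_left g hL.ne']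
        rw [mul_add, mul_one, smul_eq_mul]
        field_simp
    _ ≤ (L / (2 * π) + 1) * (∫ θ in 0..2 * π, g θ) / 2 := by
        gcongr
        exact hperiodic.intervalIntegral_le_of_nonneg (by positivity)
          (hg.intervalIntegrable _ _) (fun θ => abs_nonneg _) _ hL.le
    _ = π + L / 2 := by
        rw [integral_abs_poissonKernel_circleMap hα']
        field_simp
        ring
end

section
/- Let p > 1 be a real number, d a natural number, and P a complex polynomial of degree at most d with P not identically zero. Define f(s) = P(p^{-s}) for complex s. Then for every real T such that f has no zeros on the segment {it : T ≤ t ≤ T+1}, one has ∫_T^{T+1} |Re(f'(it)/f(it))| dt ≤ d(π + log p). -/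
/-! On the line `Re s = 0` the point `w = p^(-it) = exp (-i L t)`, `L = log p`, runs around the unit
circle with speed `L`. Over the roots `z` of `P`, `Re (f'/f)` is the sum of the terms
`Re (-L w / (w - z))`, so it suffices to bound the integral of the absolute value of each term by
`π + L`. From `2 Re (w / (w - z)) - 1 = (1 - |z|²) / |w - z|²`, the term has constant sign when
`|z| ≤ 1` and is at least `-L/2` when `|z| > 1`; either way its absolute value is at most
`L Re (1 - α w)⁻¹` with `|α| ≤ 1` (`α = z̄`, resp. `α = 1/z`). Finally `L Re (1 - α w)⁻¹ - L` is the
derivative of the argument of `1 - α w`, a path in the right half-plane, whose argument changes by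
at most `π`. -/

open Complex Polynomial Real Set MeasureTheory intervalIntegral
open scoped ComplexConjugate

theorem HasDerivAt.arg_of_mem_slitPlane {v : ℝ → ℂ} {v' : ℂ} {t : ℝ} (hv : HasDerivAt v v' t)
    (h : v t ∈ slitPlane) : HasDerivAt (fun t => arg (v t)) (v' / v t).im t := by
  simpa only [Function.comp_def, imCLM_apply, log_im] using
    imCLM.hasFDerivAt.comp_hasDerivAt t (hv.clog_real h)

theorem abs_arg_sub_arg_le_pi {x y : ℂ} (hx : 0 ≤ x.re) (hy : 0 ≤ y.re) :
    |arg x - arg y| ≤ π := by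
  have hx' := abs_le.mp (abs_arg_le_pi_div_two_iff.mpr hx)
  have hy' := abs_le.mp (abs_arg_le_pi_div_two_iff.mpr hy)
  rw [abs_le]
  constructor <;> linarith [hx'.1, hx'.2, hy'.1, hy'.2]

theorem integral_const_add_im_div_le {v v' : ℝ → ℂ} {a b : ℝ} (c : ℝ)
    (hv : ∀ t ∈ uIcc a b, HasDerivAt v (v' t) t) (hv' : ContinuousOn v' (uIcc a b))
    (hre : ∀ t ∈ uIcc a b, 0 < (v t).re) :
    ∫ t in a..b, (c + (v' t / v t).im) ≤ c * (b - a) + π := by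
  have hF : ∀ t ∈ uIcc a b,
      HasDerivAt (fun t => c * t + arg (v t)) (c + (v' t / v t).im) t := fun t ht =>
    (hasDerivAt_const_mul c).add ((hv t ht).arg_of_mem_slitPlane (Or.inl (hre t ht)))
  have hvc : ContinuousOn v (uIcc a b) := fun t ht => (hv t ht).continuousAt.continuousWithinAt
  have hint : IntervalIntegrable (fun t => c + (v' t / v t).im) volume a b :=
    (continuousOn_const.add (continuous_im.comp_continuousOn
      (hv'.div hvc fun t ht => ne_zero_of_re_pos (hre t ht)))).intervalIntegrable
  rw [integral_eq_sub_of_hasDerivAt hF hint]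
  have := abs_arg_sub_arg_le_pi (hre b right_mem_uIcc).le (hre a left_mem_uIcc).le
  linarith [le_abs_self (arg (v b) - arg (v a))]

theorem two_mul_re_div_sub_sub_one {w z : ℂ} (hw : ‖w‖ = 1) (hwz : w ≠ z) :
    2 * (w / (w - z)).re - 1 = (1 - ‖z‖ ^ 2) / ‖w - z‖ ^ 2 := by
  have hw2 : w.re * w.re + w.im * w.im = 1 := by
    rw [← normSq_apply, normSq_eq_norm_sq, hw, one_pow]
  have hpos : normSq (w - z) ≠ 0 := by simpa [sub_eq_zero] using hwz
  rw [← normSq_eq_norm_sq, ← normSq_eq_norm_sq, div_re, eq_div_iff hpos, ← add_div, sub_mul,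
    mul_assoc, div_mul_cancel₀ _ hpos, normSq_apply z]
  rw [normSq_apply]
  simp only [sub_re, sub_im]
  linear_combination hw2

theorem re_one_sub_pos_of_norm_le_one {u : ℂ} (hu : ‖u‖ ≤ 1) (hu1 : u ≠ 1) : 0 < (1 - u).re := by
  have h2 : u.re * u.re + u.im * u.im ≤ 1 := by
    rw [← normSq_apply, normSq_eq_norm_sq]; nlinarith [norm_nonneg u]
  rw [sub_re, one_re, sub_pos]
  by_contra! h
  have hre : u.re = 1 := by nlinarith [sq_nonneg u.im, abs_re_le_norm u, le_abs_self u.re]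
  have him : u.im = 0 := by nlinarith [sq_nonneg u.im]
  exact hu1 (Complex.ext hre him)

theorem hasDerivAt_cexp_mul_ofReal (c : ℂ) (t : ℝ) :
    HasDerivAt (fun t : ℝ => cexp (c * t)) (c * cexp (c * t)) t := by
  simpa [mul_comm] using ((hasDerivAt_id t).ofReal_comp.const_mul c).cexp

theorem integral_mul_re_inv_one_sub_mul_cexp_le {L a b : ℝ} {α : ℂ} (hab : a ≤ b) (hα : ‖α‖ ≤ 1)
    (hne : ∀ t ∈ Icc a b, α * cexp (-(L * I) * t) ≠ 1) :
    ∫ t in a..b, L * (1 - α * cexp (-(L * I) * t))⁻¹.re ≤ L * (b - a) + π := by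
  set u : ℝ → ℂ := fun t => α * cexp (-(L * I) * t)
  have hu : ∀ t, HasDerivAt u (-(L * I) * u t) t := fun t => by
    simpa [u, mul_left_comm] using (hasDerivAt_cexp_mul_ofReal (-(L * I)) t).const_mul α
  have hu1 : ∀ t ∈ Icc a b, (1 - u t) ≠ 0 := fun t ht => sub_ne_zero.mpr (hne t ht).symm
  rw [← uIcc_of_le hab] at hne hu1
  have hident : ∀ t ∈ uIcc a b,
      L * (1 - u t)⁻¹.re = L + (-(-(L * I) * u t) / (1 - u t)).im := fun t ht => by
    have : -(-(L * I) * u t) / (1 - u t) = L * ((1 - u t)⁻¹ - 1) * I := by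
      field_simp [hu1 t ht]; ring
    rw [this, mul_I_im, re_ofReal_mul, sub_re, one_re]
    ring
  rw [integral_congr hident]
  refine integral_const_add_im_div_le L (fun t _ => (hu t).const_sub 1)
    (by fun_prop) fun t ht => re_one_sub_pos_of_norm_le_one ?_ (hne t ht)
  simpa [u, norm_exp] using hα

theorem abs_re_mul_div_sub_of_norm_le_one {L : ℝ} {w z : ℂ} (hL : 0 ≤ L) (hw : ‖w‖ = 1)
    (hz : ‖z‖ ≤ 1) (hwz : w ≠ z) :
    |(-L * w / (w - z)).re| = L * (1 - conj z * w)⁻¹.re := by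
  have hw0 : w ≠ 0 := norm_ne_zero_iff.mp (by simp [hw])
  have hhalf : 0 ≤ 2 * (w / (w - z)).re - 1 := by
    rw [two_mul_re_div_sub_sub_one hw hwz]
    exact div_nonneg (by nlinarith [norm_nonneg z]) (sq_nonneg _)
  have hconj : conj (w / (w - z)) = (1 - conj z * w)⁻¹ := by
    rw [map_div₀, map_sub, ← inv_eq_conj hw]
    field_simp
  have hre : (-L * w / (w - z)).re = -(L * (w / (w - z)).re) := by
    rw [mul_div_assoc, neg_mul, neg_re, re_ofReal_mul]
  rw [← hconj, conj_re, hre, abs_neg, abs_of_nonneg (by nlinarith)]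

theorem abs_re_mul_div_sub_le_of_one_lt_norm {L : ℝ} {w z : ℂ} (hL : 0 ≤ L) (hw : ‖w‖ = 1)
    (hz : 1 < ‖z‖) :
    |(-L * w / (w - z)).re| ≤ L * (1 - z⁻¹ * w)⁻¹.re := by
  have hwz : w ≠ z := by rintro rfl; linarith
  have hz0 : z ≠ 0 := norm_ne_zero_iff.mp (by linarith)
  have hhalf : 2 * (w / (w - z)).re - 1 ≤ 0 := by
    rw [two_mul_re_div_sub_sub_one hw hwz]
    exact div_nonpos_of_nonpos_of_nonneg (by nlinarith) (sq_nonneg _)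
  have hinv : (1 - z⁻¹ * w)⁻¹ = 1 - w / (w - z) := by
    have : w - z ≠ 0 := sub_ne_zero.mpr hwz
    field_simp
    ring
  have hre : (-L * w / (w - z)).re = -(L * (w / (w - z)).re) := by
    rw [mul_div_assoc, neg_mul, neg_re, re_ofReal_mul]
  rw [hinv, sub_re, one_re, hre, abs_le]
  constructor <;> nlinarith

theorem intervalIntegrable_re_mul_cexp_div_cexp_sub {L a b : ℝ} {z : ℂ}
    (hne : ∀ t ∈ uIcc a b, cexp (-(L * I) * t) ≠ z) :
    IntervalIntegrable (fun t : ℝ => (-L * cexp (-(L * I) * t) / (cexp (-(L * I) * t) - z)).re)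
      volume a b :=
  ContinuousOn.intervalIntegrable <| continuous_re.comp_continuousOn <|
    (by fun_prop : Continuous _).continuousOn.div (by fun_prop : Continuous _).continuousOn
      fun t ht => sub_ne_zero.mpr (hne t ht)

theorem integral_abs_re_mul_cexp_div_cexp_sub_le {L a b : ℝ} {z : ℂ} (hL : 0 ≤ L) (hab : a ≤ b)
    (hne : ∀ t ∈ Icc a b, cexp (-(L * I) * t) ≠ z) :
    ∫ t in a..b, |(-L * cexp (-(L * I) * t) / (cexp (-(L * I) * t) - z)).re| ≤
      π + L * (b - a) := by
  have hE : ∀ t : ℝ, ‖cexp (-(L * I) * t)‖ = 1 := fun t => by simp [norm_exp]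
  rw [add_comm]
  rcases le_or_gt ‖z‖ 1 with hz | hz
  · rw [integral_congr fun t ht => abs_re_mul_div_sub_of_norm_le_one hL (hE t) hz
      (hne t (uIcc_of_le hab ▸ ht))]
    refine integral_mul_re_inv_one_sub_mul_cexp_le hab (by simpa using hz) fun t ht h => ?_
    have h' := congrArg conj h
    rw [map_mul, conj_conj, ← inv_eq_conj (hE t), map_one, mul_inv_eq_one₀ (by simp)] at h'
    exact hne t ht h'.symm
  · have hu : ∀ t : ℝ, ‖z⁻¹ * cexp (-(L * I) * t)‖ < 1 := fun t => by
      rwa [norm_mul, hE, mul_one, norm_inv, inv_lt_one₀ (by linarith)]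
    have hu1 : ∀ t : ℝ, z⁻¹ * cexp (-(L * I) * t) ≠ 1 := fun t h =>
      (hu t).ne (by rw [h, norm_one])
    have hEz : ∀ t : ℝ, cexp (-(L * I) * t) ≠ z := fun t h => by
      linarith [hE t ▸ congrArg norm h]
    refine (integral_mono_on hab ?_ ?_ fun t _ =>
      abs_re_mul_div_sub_le_of_one_lt_norm hL (hE t) hz).trans
      (integral_mul_re_inv_one_sub_mul_cexp_le hab (by simpa using (hu 0).le) fun t _ => hu1 t)
    · exact (intervalIntegrable_re_mul_cexp_div_cexp_sub fun t _ => hEz t).abs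
    · exact (continuous_const.mul (continuous_re.comp ((by fun_prop : Continuous _).inv₀
        fun t => sub_ne_zero.mpr (hu1 t).symm))).intervalIntegrable _ _

theorem integral_abs_multiset_sum_le {ι : Type*} {a b C : ℝ} (hab : a ≤ b) (s : Multiset ι)
    {g : ι → ℝ → ℝ} (hg : ∀ i ∈ s, IntervalIntegrable (g i) volume a b)
    (hC : ∀ i ∈ s, ∫ t in a..b, |g i t| ≤ C) :
    ∫ t in a..b, |(s.map fun i => g i t).sum| ≤ Multiset.card s * C := by
  classical
  have hsum : ∀ t, (s.map fun i => g i t).sum = ∑ i : s, g i t := fun t => by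
    rw [← Multiset.map_univ]; rfl
  have hg' : ∀ i : s, IntervalIntegrable (g i) volume a b := fun i => hg i Multiset.coe_mem
  have hint : IntervalIntegrable (fun t => ∑ i : s, g i t) volume a b := by
    simpa only [Finset.sum_fn] using IntervalIntegrable.sum _ fun i _ => hg' i
  have hint' : IntervalIntegrable (fun t => ∑ i : s, |g i t|) volume a b := by
    simpa only [Finset.sum_fn] using IntervalIntegrable.sum _ fun i _ => (hg' i).abs
  simp_rw [hsum]
  calc ∫ t in a..b, |∑ i : s, g i t|
      ≤ ∫ t in a..b, ∑ i : s, |g i t| :=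
        integral_mono_on hab hint.abs hint' fun t _ => Finset.abs_sum_le_sum_abs _ _
    _ = ∑ i : s, ∫ t in a..b, |g i t| := integral_finsetSum fun i _ => (hg' i).abs
    _ ≤ ∑ _i : s, C := Finset.sum_le_sum fun i _ => hC i Multiset.coe_mem
    _ = Multiset.card s * C := by simp

theorem deriv_eval_comp_div_eval {𝕜 : Type*} [NontriviallyNormedField 𝕜] [IsAlgClosed 𝕜]
    (P : 𝕜[X]) {g : 𝕜 → 𝕜} {s : 𝕜} (hg : DifferentiableAt 𝕜 g s) (hP : P.eval (g s) ≠ 0) :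
    deriv (fun s => P.eval (g s)) s / P.eval (g s) =
      (P.roots.map fun z => deriv g s / (g s - z)).sum := by
  have hPg : HasDerivAt (fun s => P.eval (g s)) (P.derivative.eval (g s) * deriv g s) s :=
    (P.hasDerivAt (g s)).comp s hg.hasDerivAt
  rw [hPg.deriv, mul_div_right_comm,
    (IsAlgClosed.splits P).eval_derivative_div_eval_of_ne_zero hP, ← Multiset.sum_map_mul_right]
  simp_rw [one_div_mul_eq_div]

theorem ofReal_cpow_neg_eq_cexp {p : ℝ} (hp : 0 < p) (s : ℂ) :
    (p : ℂ) ^ (-s) = cexp (-Real.log p * s) := by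
  rw [cpow_def_of_ne_zero (by exact_mod_cast hp.ne'), ← ofReal_log hp.le, neg_mul_comm]

theorem deriv_eval_cexp_mul_div_eval (P : ℂ[X]) (c s : ℂ) (hP : P.eval (cexp (c * s)) ≠ 0) :
    deriv (fun s => P.eval (cexp (c * s))) s / P.eval (cexp (c * s)) =
      (P.roots.map fun z => c * cexp (c * s) / (cexp (c * s) - z)).sum := by
  have hg : HasDerivAt (fun s => cexp (c * s)) (c * cexp (c * s)) s := by
    simpa [mul_comm] using ((hasDerivAt_id s).const_mul c).cexp
  rw [deriv_eval_comp_div_eval P (g := fun s => cexp (c * s)) hg.differentiableAt hP, hg.deriv]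

theorem integral_abs_re_logDeriv_poly_cpow_le_general {p : ℝ} (hp : 1 < p) (d : ℕ)
    (P : Polynomial ℂ) (hdeg : P.natDegree ≤ d) (T : ℝ)
    (f : ℂ → ℂ) (hf : f = fun s => P.eval ((p : ℂ) ^ (-s)))
    (hz : ∀ t ∈ Set.Icc T (T + 1), f (Complex.I * (t : ℂ)) ≠ 0) :
    ∫ t in T..(T + 1),
        |((deriv f (Complex.I * (t : ℂ)) / f (Complex.I * (t : ℂ))).re)| ≤
      d * (Real.pi + Real.log p) := by
  set L := Real.log p
  have hL : 0 ≤ L := Real.log_nonneg hp.le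
  have hT : T ≤ T + 1 := by linarith
  have hf' : f = fun s => P.eval (cexp (-L * s)) := by
    simp_rw [hf, ofReal_cpow_neg_eq_cexp (by linarith : 0 < p)]
    rfl
  have hE : ∀ t : ℝ, cexp (-L * (I * t)) = cexp (-(L * I) * t) := fun t => by ring_nf
  have hroots : ∀ t ∈ Icc T (T + 1), ∀ z ∈ P.roots, cexp (-(L * I) * t) ≠ z :=
    fun t ht z hzP hEz => hz t ht (by rw [hf', ← (mem_roots'.mp hzP).2, ← hEz, ← hE])
  have hlog : ∀ t ∈ uIcc T (T + 1), (deriv f (I * t) / f (I * t)).re =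
      (P.roots.map fun z => (-L * cexp (-(L * I) * t) / (cexp (-(L * I) * t) - z)).re).sum :=
    fun t ht => by
      have hft := hz t (uIcc_of_le hT ▸ ht)
      rw [hf'] at hft ⊢
      rw [deriv_eval_cexp_mul_div_eval P _ _ hft, hE]
      exact (map_multiset_sum reAddGroupHom _).trans (by rw [Multiset.map_map]; rfl)
  rw [integral_congr fun t ht => congrArg abs (hlog t ht)]
  calc _ ≤ Multiset.card P.roots * (π + L * (T + 1 - T)) :=
        integral_abs_multiset_sum_le hT _
          (fun z hzP => intervalIntegrable_re_mul_cexp_div_cexp_sub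
            fun t ht => hroots t (uIcc_of_le hT ▸ ht) z hzP) fun z hzP =>
          integral_abs_re_mul_cexp_div_cexp_sub_le hL hT
            fun t ht => hroots t ht z hzP
    _ ≤ d * (π + L) := by
        rw [add_sub_cancel_left, mul_one]
        gcongr
        exact (card_roots' P).trans hdeg

theorem integral_abs_re_logDeriv_poly_cpow_le {p : ℝ} (hp : 1 < p) (d : ℕ)
    (P : Polynomial ℂ) (hP : P ≠ 0) (hdeg : P.natDegree ≤ d) (T : ℝ)
    (f : ℂ → ℂ) (hf : f = fun s => P.eval ((p : ℂ) ^ (-s)))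
    (hz : ∀ t ∈ Set.Icc T (T + 1), f (Complex.I * (t : ℂ)) ≠ 0) :
    ∫ t in T..(T + 1),
        |((deriv f (Complex.I * (t : ℂ)) / f (Complex.I * (t : ℂ))).re)| ≤
      d * (Real.pi + Real.log p) :=
  integral_abs_re_logDeriv_poly_cpow_le_general hp d P hdeg T f hf hz
end

section
/- Let α be a real number, write α = n + δ with n ∈ ℤ and -1/2 < δ ≤ 1/2, and suppose δ ≠ 0. Then the series Σ_{k ≥ 0, k ≠ ⌊-n/2⌋} 1/(|α+2k| · |α+2k+1|) converges and is bounded by an absolute constant independent of α. -/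
lemma key_prod_lb (m : ℤ) (δ : ℝ) (hδ1 : -(1/2) < δ) (hδ2 : δ ≤ 1/2)
    (hm0 : m ≠ 0) (hm1 : m ≠ -1) :
    ((m : ℝ))^2 / 8 ≤ |(m : ℝ) + δ| * |(m : ℝ) + δ + 1| := by
  rcases lt_or_ge m 0 with hm | hm
  · have hm2 : m ≤ -2 := by omega
    have hm2' : (m : ℝ) ≤ -2 := by exact_mod_cast hm2
    have h1 : (m : ℝ) + δ ≤ -3/2 := by linarith
    have h2 : (m : ℝ) + δ + 1 ≤ -1/2 := by linarith
    rw [abs_of_neg (by linarith), abs_of_neg (by linarith)]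
    nlinarith [sq_nonneg ((m:ℝ) + 2)]
  · have hm1' : 1 ≤ m := by omega
    have hm1'' : (1 : ℝ) ≤ (m : ℝ) := by exact_mod_cast hm1'
    have h1 : (1:ℝ)/2 ≤ (m : ℝ) + δ := by linarith
    rw [abs_of_pos (by linarith), abs_of_pos (by linarith)]
    nlinarith [sq_nonneg ((m:ℝ) - 1)]

theorem sum_away_from_singularity_bounded :
    ∃ C : ℝ, 0 < C ∧ ∀ (α : ℝ) (n : ℤ) (δ : ℝ), α = n + δ → -(1/2) < δ → δ ≤ 1/2 → δ ≠ 0 →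
      Summable (fun k : ℕ =>
        if (k : ℤ) = ⌊-(n : ℝ) / 2⌋ then 0
        else 1 / (|α + 2 * k| * |α + 2 * k + 1|)) ∧
      (∑' k : ℕ,
        if (k : ℤ) = ⌊-(n : ℝ) / 2⌋ then 0
        else 1 / (|α + 2 * k| * |α + 2 * k + 1|)) ≤ C := by
  have hg : Summable (fun m : ℤ => 8 * (1 / (m : ℝ)^2)) :=
    (Real.summable_one_div_int_pow.mpr one_lt_two).mul_left 8
  refine ⟨(∑' m : ℤ, 8 * (1 / (m : ℝ)^2)) + 1, ?_, ?_⟩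
  · have : 0 ≤ ∑' m : ℤ, 8 * (1 / (m : ℝ)^2) :=
      tsum_nonneg (fun m => by positivity)
    linarith
  intro α n δ hα hδ1 hδ2 hδ0
  set f : ℕ → ℝ := fun k =>
    if (k : ℤ) = ⌊-(n : ℝ) / 2⌋ then 0
    else 1 / (|α + 2 * k| * |α + 2 * k + 1|) with hf
  have hfloor : ⌊-(n : ℝ) / 2⌋ = (-n) / 2 := by
    rw [show -(n : ℝ) / 2 = ((((-n : ℤ) : ℚ) / ((2 : ℕ) : ℚ) : ℚ) : ℝ) by push_cast; ring,
      Rat.floor_cast, Rat.floor_intCast_div_natCast]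
    norm_num
  have hi : Function.Injective (fun k : ℕ => n + 2 * (k : ℤ)) := by
    intro a b h
    simp only at h
    omega
  have hle : ∀ k : ℕ, f k ≤ 8 * (1 / ((n + 2 * (k : ℤ) : ℤ) : ℝ)^2) := by
    intro k
    by_cases hk : (k : ℤ) = ⌊-(n : ℝ) / 2⌋
    · simp only [hf, if_pos hk]
      positivity
    · simp only [hf, if_neg hk]
      have hm0 : n + 2 * (k : ℤ) ≠ 0 := by
        intro h; apply hk; rw [hfloor]; omega
      have hm1 : n + 2 * (k : ℤ) ≠ -1 := by
        intro h; apply hk; rw [hfloor]; omega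
      have hkey := key_prod_lb (n + 2 * (k : ℤ)) δ hδ1 hδ2 hm0 hm1
      have hx : α + 2 * k = ((n + 2 * (k : ℤ) : ℤ) : ℝ) + δ := by
        push_cast; rw [hα]; ring
      rw [hx]
      have hmpos : (0:ℝ) < ((n + 2 * (k : ℤ) : ℤ) : ℝ)^2 := by
        have : ((n + 2 * (k : ℤ) : ℤ) : ℝ) ≠ 0 := by exact_mod_cast hm0
        positivity
      have hprodpos : 0 < |((n + 2 * (k : ℤ) : ℤ) : ℝ) + δ| * |((n + 2 * (k : ℤ) : ℤ) : ℝ) + δ + 1| := by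
        linarith
      rw [show (8:ℝ) * (1 / (((n + 2 * (k : ℤ) : ℤ) : ℝ))^2) = 8 / (((n + 2 * (k : ℤ) : ℤ) : ℝ))^2 by ring,
        div_le_div_iff₀ hprodpos hmpos]
      nlinarith
  have hfnonneg : ∀ k, 0 ≤ f k := by
    intro k
    simp only [hf]
    split <;> positivity
  have hgi : Summable ((fun m : ℤ => 8 * (1 / (m : ℝ)^2)) ∘ (fun k : ℕ => n + 2 * (k : ℤ))) :=
    hg.comp_injective hi
  have hsf : Summable f := Summable.of_nonneg_of_le hfnonneg hle hgi
  refine ⟨hsf, ?_⟩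
  have hts : ∑' k, f k ≤ ∑' m : ℤ, 8 * (1 / (m : ℝ)^2) :=
    Summable.tsum_le_tsum_of_inj _ hi (fun c _ => by positivity) hle hsf hg
  linarith
end
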